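/- The function w(z) := z + (1/(2e)) Σ_{n≥1} sin(x/n!) e^{−y²/n!²}, z = x+iy, is the pointwise limit of the maps w_N(z) := z + (1/(2e)) Σ_{n=1}^{N} sin(x/n!) e^{−y²/n!²}, each of which differs from the identity by a function that is 2π·N!-periodic in x; the convergence is locally uniform on ℂ but w − id is not a uniform limit on ℂ of functions periodic in x, i.e. w − id is not limit periodic in x. -/

import Mathlib

/-! The terms `sin(x/n!) e^{-y²/n!²}` with `n ≤ N` are `2π N!`-periodic in `x`, and the
`n`-th term is at most `|x|/n!`, which gives the periodicity of `w_N − id` and locally uniform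
convergence. Given a period `2πL`, look at the real point `x = 2π (L+1) (4L+3)!`, a multiple of
`2πL`: the terms with `n ≤ 4L+3` vanish there, the term `n = 4L+4` is `sin(π/2) = 1`, and the
later ones have arguments in `(0, π/2]`, so `w − id` is at least `1/(2e)` there, while it vanishes
at `0`. A `2πL`-periodic function agrees at the two points, so its distance to `w − id` is at
least `1/(4e)`. -/

noncomputable section

open Filter

/-- `m`-th term `sin(x/m!) e^{−y²/m!²}` of the series for `w − id`. -/
def sinTerm (m : ℕ) (z : ℂ) : ℝ :=
  Real.sin (z.re / (Nat.factorial m : ℝ))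
    * Real.exp (-(z.im ^ 2) / ((Nat.factorial m : ℝ)) ^ 2)

/-- Partial map `w_N(z) = z + (1/(2e)) Σ_{n=1}^{N} sin(x/n!) e^{−y²/n!²}`. -/
def wpart (N : ℕ) (z : ℂ) : ℂ :=
  z + (((2 * Real.exp 1)⁻¹ * ∑ k ∈ Finset.range N, sinTerm (k + 1) z : ℝ) : ℂ)

/-- `w(z) = z + (1/(2e)) Σ_{n≥1} sin(x/n!) e^{−y²/n!²}`. -/
def wfun (z : ℂ) : ℂ :=
  z + (((2 * Real.exp 1)⁻¹ * ∑' k : ℕ, sinTerm (k + 1) z : ℝ) : ℂ)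

open Nat Real

lemma abs_sinTerm_le (m : ℕ) (z : ℂ) : |sinTerm m z| ≤ |z.re| / m ! := by
  have hexp : Real.exp (-(z.im ^ 2) / (m ! : ℝ) ^ 2) ≤ 1 :=
    Real.exp_le_one_iff.mpr (div_nonpos_of_nonpos_of_nonneg (neg_nonpos.mpr (sq_nonneg _))
      (sq_nonneg _))
  calc |sinTerm m z|
      = |Real.sin (z.re / m !)| * Real.exp (-(z.im ^ 2) / (m ! : ℝ) ^ 2) := by
        rw [sinTerm, abs_mul, abs_of_pos (Real.exp_pos _)]
    _ ≤ |z.re / m !| * 1 :=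
        mul_le_mul Real.abs_sin_le_abs hexp (Real.exp_pos _).le (abs_nonneg _)
    _ = |z.re| / m ! := by rw [mul_one, abs_div, Nat.abs_cast]

lemma summable_div_factorial_succ (C : ℝ) : Summable fun k : ℕ ↦ C / (k + 1)! := by
  refine (summable_nat_add_iff (f := fun n ↦ C / (n ! : ℝ)) 1).mpr ?_
  simpa [div_eq_mul_inv] using (Real.summable_pow_div_factorial 1).mul_left C

lemma summable_sinTerm (z : ℂ) : Summable fun k ↦ sinTerm (k + 1) z :=
  .of_norm_bounded (summable_div_factorial_succ |z.re|) fun k ↦ abs_sinTerm_le (k + 1) z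

lemma tendstoLocallyUniformly_sum_sinTerm :
    TendstoLocallyUniformly (fun N z ↦ ∑ k ∈ Finset.range N, sinTerm (k + 1) z)
      (fun z ↦ ∑' k, sinTerm (k + 1) z) atTop := by
  refine tendstoLocallyUniformly_of_forall_exists_nhds fun x ↦
    ⟨Metric.ball x 1, Metric.ball_mem_nhds x one_pos, ?_⟩
  refine tendstoUniformlyOn_tsum_nat (summable_div_factorial_succ (‖x‖ + 1)) fun k y hy ↦ ?_
  have hy : ‖y‖ ≤ ‖x‖ + 1 := by
    have := norm_le_norm_add_norm_sub' y x
    rw [mem_ball_iff_norm] at hy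
    linarith
  calc ‖sinTerm (k + 1) y‖ ≤ |y.re| / (k + 1)! := abs_sinTerm_le (k + 1) y
    _ ≤ (‖x‖ + 1) / (k + 1)! := by gcongr; exact (Complex.abs_re_le_norm y).trans hy

lemma tendstoLocallyUniformly_wpart : TendstoLocallyUniformly wpart wfun atTop := by
  have hscale : UniformContinuous fun t : ℝ ↦ (((2 * Real.exp 1)⁻¹ * t : ℝ) : ℂ) :=
    Complex.isometry_ofReal.uniformContinuous.comp (uniformContinuous_mul_left' _)
  have hid : TendstoLocallyUniformly (fun _ : ℕ ↦ (id : ℂ → ℂ)) id atTop :=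
    fun u hu _ ↦ ⟨Set.univ, Filter.univ_mem, .of_forall fun _ _ _ ↦ refl_mem_uniformity hu⟩
  exact hid.add (hscale.comp_tendstoLocallyUniformly tendstoLocallyUniformly_sum_sinTerm)

lemma periodic_sinTerm {m K : ℕ} (h : m ! ∣ K) :
    Function.Periodic (sinTerm m) ((2 * π * K : ℝ) : ℂ) := by
  obtain ⟨q, rfl⟩ := h
  intro z
  have hm : (m ! : ℝ) ≠ 0 := by positivity
  have harg : (z.re + 2 * π * ↑(m ! * q)) / m ! = z.re / m ! + q * (2 * π) := by
    push_cast; field_simp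
  simp only [sinTerm, Complex.add_re, Complex.add_im, Complex.ofReal_re, Complex.ofReal_im,
    add_zero, harg, Real.sin_add_nat_mul_two_pi]

lemma wpart_add_two_pi_mul_factorial (N : ℕ) (z : ℂ) :
    wpart N (z + ((2 * π * N ! : ℝ) : ℂ)) = wpart N z + ((2 * π * N ! : ℝ) : ℂ) := by
  have hterm : ∀ k ∈ Finset.range N,
      sinTerm (k + 1) (z + ((2 * π * N ! : ℝ) : ℂ)) = sinTerm (k + 1) z := fun k hk ↦
    periodic_sinTerm (Nat.factorial_dvd_factorial (Finset.mem_range.mp hk)) z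
  simp only [wpart, Finset.sum_congr rfl hterm]
  ring

lemma sinTerm_ofReal_nonneg {m : ℕ} {x : ℝ} (h0 : 0 ≤ x) (hx : x ≤ π * m !) :
    0 ≤ sinTerm m x := by
  have hm : (0 : ℝ) < m ! := by positivity
  refine mul_nonneg (Real.sin_nonneg_of_nonneg_of_le_pi (by positivity) ?_) (Real.exp_pos _).le
  simpa [div_le_iff₀ hm] using hx

lemma one_le_tsum_sinTerm (n : ℕ) :
    1 ≤ ∑' k, sinTerm (k + 1) ((2 * π * ((n + 1) * (4 * n + 3)! : ℕ) : ℝ) : ℂ) := by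
  set K := (n + 1) * (4 * n + 3)!
  have hx : 2 * π * K = π / 2 * (4 * n + 4)! := by
    simp only [K, Nat.factorial_succ (4 * n + 3)]
    push_cast
    ring
  have hnonneg : ∀ k, 0 ≤ sinTerm (k + 1) ((2 * π * K : ℝ) : ℂ) := by
    intro k
    rcases le_or_gt (k + 1) (4 * n + 3) with hk | hk
    · rw [(periodic_sinTerm (dvd_mul_of_dvd_right (Nat.factorial_dvd_factorial hk) _)).eq]
      simp [sinTerm]
    · have : ((4 * n + 4)! : ℝ) ≤ (k + 1)! := by exact_mod_cast Nat.factorial_le hk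
      refine sinTerm_ofReal_nonneg (by positivity) ?_
      rw [hx]
      nlinarith [pi_pos]
  have hpeak : sinTerm (4 * n + 4) ((2 * π * K : ℝ) : ℂ) = 1 := by
    have : ((4 * n + 4)! : ℝ) ≠ 0 := by positivity
    simp [sinTerm, hx, mul_div_assoc, div_self this]
  calc 1 = sinTerm (4 * n + 3 + 1) ((2 * π * K : ℝ) : ℂ) := hpeak.symm
    _ ≤ _ := (summable_sinTerm _).le_tsum (4 * n + 3) fun k _ ↦ hnonneg k

lemma wfun_sub_self (z : ℂ) :
    wfun z - z = (((2 * Real.exp 1)⁻¹ * ∑' k, sinTerm (k + 1) z : ℝ) : ℂ) :=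
  add_sub_cancel_left _ _

lemma Function.Periodic.norm_add_nsmul_sub_le {α E : Type*} [AddMonoid α]
    [SeminormedAddGroup E] {f h : α → E} {c : α} {ε : ℝ} (hper : Function.Periodic h c)
    (happrox : ∀ x, ‖f x - h x‖ ≤ ε) (n : ℕ) (x : α) :
    ‖f (x + n • c) - f x‖ ≤ 2 * ε :=
  calc ‖f (x + n • c) - f x‖ = ‖(f (x + n • c) - h (x + n • c)) - (f x - h x)‖ := by
        rw [hper.nsmul n x, sub_sub_sub_cancel_right]
    _ ≤ ε + ε := (norm_sub_le _ _).trans (add_le_add (happrox _) (happrox _))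
    _ = 2 * ε := by ring

lemma inv_two_mul_exp_one_le_of_periodic_approx {L : ℕ} (hL : 0 < L) {h : ℂ → ℂ} {ε : ℝ}
    (hper : Function.Periodic h ((2 * π * L : ℝ) : ℂ))
    (happrox : ∀ z, ‖(wfun z - z) - h z‖ ≤ ε) :
    (2 * Real.exp 1)⁻¹ ≤ 2 * ε := by
  obtain ⟨q, hq⟩ : L ∣ (L + 1) * (4 * L + 3)! :=
    dvd_mul_of_dvd_right (Nat.dvd_factorial hL (by omega)) _
  have hp : (0 : ℂ) + q • ((2 * π * L : ℝ) : ℂ) =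
      ((2 * π * ((L + 1) * (4 * L + 3)! : ℕ) : ℝ) : ℂ) := by
    rw [hq, zero_add, nsmul_eq_mul]
    push_cast
    ring
  have hbound := hper.norm_add_nsmul_sub_le happrox q 0
  have hzero : ∑' k, sinTerm (k + 1) 0 = 0 := by simp [sinTerm]
  rw [hp, wfun_sub_self, wfun_sub_self, hzero, mul_zero, Complex.ofReal_zero, sub_zero,
    Complex.norm_real, Real.norm_eq_abs] at hbound
  calc (2 * Real.exp 1)⁻¹
      ≤ (2 * Real.exp 1)⁻¹ * _ :=
        le_mul_of_one_le_right (by positivity) (one_le_tsum_sinTerm L)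
    _ ≤ 2 * ε := (le_abs_self _).trans hbound

/-- Each `w_N − id` is `2π·N!`-periodic in `x`, the partial maps `w_N` converge to `w`
locally uniformly on `ℂ`, but `w − id` is not limit periodic in `x`: it is not a
uniform limit on `ℂ` of functions periodic in `x`. -/
theorem stmt9 :
    (∀ N : ℕ, ∀ z : ℂ,
      wpart N (z + ((2 * Real.pi * (Nat.factorial N : ℝ) : ℝ) : ℂ))
        = wpart N z + ((2 * Real.pi * (Nat.factorial N : ℝ) : ℝ) : ℂ)) ∧
    TendstoLocallyUniformly (fun N => wpart N) wfun atTop ∧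
    ¬ (∀ ε : ℝ, 0 < ε → ∃ L : ℕ, 0 < L ∧ ∃ h : ℂ → ℂ,
        (∀ z, h (z + ((2 * Real.pi * (L : ℝ) : ℝ) : ℂ)) = h z) ∧
        ∀ z, ‖(wfun z - z) - h z‖ ≤ ε) := by
  refine ⟨wpart_add_two_pi_mul_factorial, tendstoLocallyUniformly_wpart, fun hlp ↦ ?_⟩
  obtain ⟨L, hL, h, hper, happrox⟩ := hlp (1 / 20) (by norm_num)
  have hgap := inv_two_mul_exp_one_le_of_periodic_approx hL hper happrox
  rw [inv_le_comm₀ (by positivity) (by norm_num)] at hgap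
  linarith [Real.exp_one_lt_d9]
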